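/- arXiv:0710.0442 — 3 statements merged into one kernel-verified Lean document; each statement's English description precedes it below -/
import Mathlib

section
/- Let R_1,…,R_M ⊂ ℝ² be rectangles, each congruent to [0,α₁]×[0,α₂] with α₁ > α₂ > 0, such that for any two distinct rectangles the unoriented angle between their long sides is at least α₂/α₁. Then for every fixed i ∈ {1,…,M}, the sum over j of the areas of the intersections satisfies Σ_{j=1}^M 𝓛²(R_i ∩ R_j) ≤ 2√2·π·α₁·α₂·log(2π·α₁/α₂). -/
/-!
The long sides of `R i` and `R j` make the angle `θⱼ = uangle (L i e₀) (L j e₀)`, and their normals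
make the same angle. So `R i ∩ R j` lies in the intersection of two strips of width `α₂` crossing
at angle `θⱼ`, a parallelogram of area `α₂² / sin θⱼ ≤ (π / 2) α₂² / θⱼ`; the term `j = i` is at
most `α₁ α₂`. Lines on one side of the line of `R i` are determined by their angle to it, so
these angles form a `δ`-separated subset of `[δ, π / 2]`, `δ = α₂ / α₁`. The `k`-th smallest
element of such a set is at least `k δ`, so the sum of reciprocals is at most
`H_n / δ ≤ (1 + log (π / (2 δ))) / δ`. Adding up, the total is at most
`α₁ α₂ + π α₁ α₂ (1 + log (π α₁ / (2 α₂)))`, which is below the stated bound.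
-/

open MeasureTheory Filter Matrix Real Set

noncomputable section

abbrev E2 := EuclideanSpace ℝ (Fin 2)

/-- unoriented angle between the lines spanned by two vectors -/
noncomputable def uangle (u v : E2) : ℝ :=
  Real.arccos (|(inner ℝ u v : ℝ)| / (‖u‖ * ‖v‖))

/-- the axis-parallel rectangle `[0, α₁] × [0, α₂]` in the plane -/
def baseRect (α₁ α₂ : ℝ) : Set E2 :=
  {x | x 0 ∈ Set.Icc 0 α₁ ∧ x 1 ∈ Set.Icc 0 α₂}

namespace Finset

variable {ι : Type*} {s : Finset ι} {g : ι → ℝ} {δ : ℝ}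

private lemma le_sub_of_separated_insert [DecidableEq ι] {a : ι} (has : a ∉ s)
    (hmax : ∀ j ∈ s, g j ≤ g a)
    (hsep : ∀ j ∈ insert a s, ∀ k ∈ insert a s, j ≠ k → δ ≤ |g j - g k|) :
    ∀ j ∈ s, g j ≤ g a - δ := by
  intro j hj
  have := hsep a (mem_insert_self a s) j (mem_insert_of_mem hj) (by rintro rfl; exact has hj)
  rw [abs_of_nonneg (by linarith [hmax j hj])] at this
  linarith

theorem mul_card_le_of_separated (hg : ∀ j ∈ s, δ ≤ g j)
    (hsep : ∀ j ∈ s, ∀ k ∈ s, j ≠ k → δ ≤ |g j - g k|) {T : ℝ} (hT : 0 ≤ T)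
    (hgT : ∀ j ∈ s, g j ≤ T) : δ * #s ≤ T := by
  classical
  induction s using Finset.induction_on_max_value g generalizing T with
  | empty => simpa using hT
  | insert a s has hmax ih =>
    have hle : δ * #s ≤ g a - δ :=
      ih (fun j hj => hg j (mem_insert_of_mem hj))
        (fun j hj k hk => hsep j (mem_insert_of_mem hj) k (mem_insert_of_mem hk))
        (by linarith [hg a (mem_insert_self a s)]) (le_sub_of_separated_insert has hmax hsep)
    rw [card_insert_of_notMem has, Nat.cast_succ]
    linarith [hgT a (mem_insert_self a s)]

theorem sum_inv_le_harmonic_div_of_separated (hδ : 0 < δ) (hg : ∀ j ∈ s, δ ≤ g j)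
    (hsep : ∀ j ∈ s, ∀ k ∈ s, j ≠ k → δ ≤ |g j - g k|) :
    ∑ j ∈ s, (g j)⁻¹ ≤ harmonic #s / δ := by
  classical
  induction s using Finset.induction_on_max_value g with
  | empty => simp
  | insert a s has hmax ih =>
    have hg' : ∀ j ∈ s, δ ≤ g j := fun j hj => hg j (mem_insert_of_mem hj)
    have hsep' : ∀ j ∈ s, ∀ k ∈ s, j ≠ k → δ ≤ |g j - g k| :=
      fun j hj k hk => hsep j (mem_insert_of_mem hj) k (mem_insert_of_mem hk)
    have hga : δ * (#s + 1) ≤ g a := by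
      have := mul_card_le_of_separated hg' hsep' (by linarith [hg a (mem_insert_self a s)])
        (le_sub_of_separated_insert has hmax hsep)
      linarith
    rw [sum_insert has, card_insert_of_notMem has, harmonic_succ, Rat.cast_add, add_div,
      add_comm]
    gcongr
    · exact ih hg' hsep'
    · push_cast
      rw [div_eq_mul_inv, ← mul_inv, mul_comm]
      exact inv_anti₀ (by positivity) hga

theorem sum_inv_le_of_separated (hδ : 0 < δ) {T : ℝ} (hδT : δ ≤ T)
    (hg : ∀ j ∈ s, g j ∈ Set.Icc δ T) (hsep : ∀ j ∈ s, ∀ k ∈ s, j ≠ k → δ ≤ |g j - g k|) :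
    ∑ j ∈ s, (g j)⁻¹ ≤ (1 + log (T / δ)) / δ := by
  have hcard : (#s : ℝ) ≤ T / δ := by
    rw [le_div_iff₀ hδ, mul_comm]
    exact mul_card_le_of_separated (fun j hj => (hg j hj).1) hsep (hδ.le.trans hδT)
      fun j hj => (hg j hj).2
  have hlog : log #s ≤ log (T / δ) := by
    rcases (#s).eq_zero_or_pos with h | h
    · simpa [h] using log_nonneg ((one_le_div hδ).2 hδT)
    · exact log_le_log (by exact_mod_cast h) hcard
  calc ∑ j ∈ s, (g j)⁻¹ ≤ harmonic #s / δ :=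
        sum_inv_le_harmonic_div_of_separated hδ (fun j hj => (hg j hj).1) hsep
    _ ≤ (1 + log #s) / δ := by gcongr; exact harmonic_le_one_add_log _
    _ ≤ (1 + log (T / δ)) / δ := by gcongr

end Finset

open scoped RealInnerProductSpace

def cross (u v : E2) : ℝ := u 0 * v 1 - u 1 * v 0

def strip (u : E2) (a w : ℝ) : Set E2 := {x | ⟪u, x⟫ ∈ Icc a (a + w)}

theorem cross_sq_add_inner_sq (u v : E2) : cross u v ^ 2 + ⟪u, v⟫ ^ 2 = ‖u‖ ^ 2 * ‖v‖ ^ 2 := by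
  simp only [cross, EuclideanSpace.real_norm_sq_eq, PiLp.inner_apply, RCLike.inner_apply,
    conj_trivial, Fin.sum_univ_two]
  ring

theorem uangle_nonneg (u v : E2) : 0 ≤ uangle u v := arccos_nonneg _

theorem uangle_le_pi_div_two (u v : E2) : uangle u v ≤ π / 2 :=
  arccos_le_pi_div_two.2 (by positivity)

theorem uangle_of_norm_eq_one {u v : E2} (hu : ‖u‖ = 1) (hv : ‖v‖ = 1) :
    uangle u v = arccos |⟪u, v⟫| := by
  simp [uangle, hu, hv]

theorem abs_cross_eq_sin_uangle {u v : E2} (hu : ‖u‖ = 1) (hv : ‖v‖ = 1) :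
    |cross u v| = sin (uangle u v) := by
  rw [uangle_of_norm_eq_one hu hv, sin_arccos, sq_abs, ← sqrt_sq_eq_abs]
  have := cross_sq_add_inner_sq u v
  rw [hu, hv] at this
  congr 1
  linarith

theorem volume_strip_inter_strip {u v : E2} (h : cross u v ≠ 0) {w : ℝ} (hw : 0 ≤ w)
    (a c w' : ℝ) :
    volume (strip u a w ∩ strip v c w') = ENNReal.ofReal (w * w' / |cross u v|) := by
  set A : Matrix (Fin 2) (Fin 2) ℝ := !![u 0, u 1; v 0, v 1]
  have hA : LinearMap.det (toLin' A) = cross u v := by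
    rw [LinearMap.det_toLin', det_fin_two_of, cross]
  have hset : strip u a w ∩ strip v c w' =
      WithLp.ofLp ⁻¹' (toLin' A ⁻¹' Icc ![a, c] ![a + w, c + w']) := by
    ext x
    simp only [strip, A, mem_inter_iff, mem_ofPred_eq, mem_preimage, mem_Icc, PiLp.inner_apply,
      RCLike.inner_apply, ringHom_apply, Fin.sum_univ_two, toLin'_apply, cons_mulVec,
      dotProduct, cons_val_zero, cons_val_one, cons_val_fin_one, empty_mulVec, Pi.le_def,
      Fin.forall_fin_two, mul_comm]
    tauto
  have hmeas : MeasurableSet (toLin' A ⁻¹' Icc ![a, c] ![a + w, c + w']) :=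
    measurableSet_Icc.preimage (toLin' A).continuous_of_finiteDimensional.measurable
  rw [hset, (PiLp.volume_preserving_ofLp (Fin 2)).measure_preimage hmeas.nullMeasurableSet,
    Measure.addHaar_preimage_linearMap _ (hA ▸ h), volume_Icc_pi, Fin.prod_univ_two, hA]
  simp only [Matrix.cons_val_zero, Matrix.cons_val_one, add_sub_cancel_left]
  rw [← ENNReal.ofReal_mul hw, ← ENNReal.ofReal_mul (by positivity), abs_inv, div_eq_inv_mul]

section Frame

variable {E : Type*} [NormedAddCommGroup E] [InnerProductSpace ℝ E]
  (b : OrthonormalBasis (Fin 2) ℝ E)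

theorem OrthonormalBasis.inner_eq_fin_two (x y : E) :
    ⟪x, y⟫ = ⟪b 0, x⟫ * ⟪b 0, y⟫ + ⟪b 1, x⟫ * ⟪b 1, y⟫ := by
  rw [← b.sum_inner_mul_inner, Fin.sum_univ_two, real_inner_comm x, real_inner_comm x]

theorem OrthonormalBasis.inner_sq_add_inner_sq (x : E) :
    ⟪b 0, x⟫ ^ 2 + ⟪b 1, x⟫ ^ 2 = ‖x‖ ^ 2 := by
  rw [← b.sum_sq_inner_right, Fin.sum_univ_two]

end Frame

theorem uangle_basis_one_eq_basis_zero (b b' : OrthonormalBasis (Fin 2) ℝ E2) :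
    uangle (b 1) (b' 1) = uangle (b 0) (b' 0) := by
  have h := b'.inner_sq_add_inner_sq (b 1)
  have h' := b.inner_sq_add_inner_sq (b' 0)
  rw [b.orthonormal.1 1, real_inner_comm (b 1), real_inner_comm (b 1)] at h
  rw [b'.orthonormal.1 0] at h'
  have habs : |⟪b 1, b' 1⟫| = |⟪b 0, b' 0⟫| := (sq_eq_sq_iff_abs_eq_abs _ _).1 (by linarith)
  rw [uangle_of_norm_eq_one (b.orthonormal.1 1) (b'.orthonormal.1 1),
    uangle_of_norm_eq_one (b.orthonormal.1 0) (b'.orthonormal.1 0), habs]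

theorem abs_inner_eq_cos_uangle_and_sin_uangle (b : OrthonormalBasis (Fin 2) ℝ E2) {x : E2}
    (hx : ‖x‖ = 1) :
    |⟪b 0, x⟫| = cos (uangle (b 0) x) ∧ |⟪b 1, x⟫| = sin (uangle (b 0) x) := by
  have hb0 : ‖b 0‖ = 1 := b.orthonormal.1 0
  have hx2 := b.inner_sq_add_inner_sq x
  rw [hx] at hx2
  have hle : |⟪b 0, x⟫| ≤ 1 := by simpa [hb0, hx] using abs_real_inner_le_norm (b 0) x
  rw [uangle_of_norm_eq_one hb0 hx, cos_arccos (by linarith [abs_nonneg ⟪b 0, x⟫]) hle,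
    sin_arccos, sq_abs, ← sqrt_sq_eq_abs ⟪b 1, x⟫]
  exact ⟨rfl, congrArg sqrt (by linarith)⟩

/-- `hside` says that the lines of `v` and `w` lie on the same side of the line of `b 0`. -/
theorem uangle_eq_abs_sub_of_mul_nonneg (b : OrthonormalBasis (Fin 2) ℝ E2) {v w : E2}
    (hv : ‖v‖ = 1) (hw : ‖w‖ = 1)
    (hside : 0 ≤ (⟪b 0, v⟫ * ⟪b 1, v⟫) * (⟪b 0, w⟫ * ⟪b 1, w⟫)) :
    uangle v w = |uangle (b 0) v - uangle (b 0) w| := by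
  obtain ⟨hcv, hsv⟩ := abs_inner_eq_cos_uangle_and_sin_uangle b hv
  obtain ⟨hcw, hsw⟩ := abs_inner_eq_cos_uangle_and_sin_uangle b hw
  have hcos : |⟪v, w⟫| = cos |uangle (b 0) v - uangle (b 0) w| := by
    rw [cos_abs, cos_sub, ← hcv, ← hsv, ← hcw, ← hsw, b.inner_eq_fin_two, ← abs_mul, ← abs_mul]
    exact (abs_add_eq_add_abs_iff _ _).2 (mul_nonneg_iff.1 (by linarith))
  have hle : |uangle (b 0) v - uangle (b 0) w| ≤ π := by
    rw [abs_le]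
    constructor <;> linarith [uangle_nonneg (b 0) v, uangle_nonneg (b 0) w,
      uangle_le_pi_div_two (b 0) v, uangle_le_pi_div_two (b 0) w]
  rw [uangle_of_norm_eq_one hv hw, hcos, arccos_cos (abs_nonneg _) hle]

theorem sum_inv_uangle_le {ι : Type*} (b : OrthonormalBasis (Fin 2) ℝ E2) {v : ι → E2}
    (hv : ∀ j, ‖v j‖ = 1) (s : Finset ι) {δ : ℝ} (hδ : 0 < δ) (hδπ : δ ≤ π / 2)
    (h0 : ∀ j ∈ s, δ ≤ uangle (b 0) (v j))
    (hsep : ∀ j ∈ s, ∀ k ∈ s, j ≠ k → δ ≤ uangle (v j) (v k)) :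
    ∑ j ∈ s, (uangle (b 0) (v j))⁻¹ ≤ 2 * ((1 + log (π / 2 / δ)) / δ) := by
  classical
  have one_side : ∀ t ⊆ s, (∀ j ∈ t, ∀ k ∈ t,
      0 ≤ (⟪b 0, v j⟫ * ⟪b 1, v j⟫) * (⟪b 0, v k⟫ * ⟪b 1, v k⟫)) →
      ∑ j ∈ t, (uangle (b 0) (v j))⁻¹ ≤ (1 + log (π / 2 / δ)) / δ := by
    intro t hts hside
    refine Finset.sum_inv_le_of_separated hδ hδπ
      (fun j hj => ⟨h0 j (hts hj), uangle_le_pi_div_two _ _⟩) fun j hj k hk hjk => ?_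
    rw [← uangle_eq_abs_sub_of_mul_nonneg b (hv j) (hv k) (hside j hj k hk)]
    exact hsep j (hts hj) k (hts hk) hjk
  rw [← Finset.sum_filter_add_sum_filter_not s (fun j => 0 ≤ ⟪b 0, v j⟫ * ⟪b 1, v j⟫), two_mul]
  refine add_le_add (one_side _ (Finset.filter_subset _ _) fun j hj k hk => ?_)
    (one_side _ (Finset.filter_subset _ _) fun j hj k hk => ?_)
  · exact mul_nonneg (Finset.mem_filter.1 hj).2 (Finset.mem_filter.1 hk).2
  · exact mul_nonneg_of_nonpos_of_nonpos (not_le.1 (Finset.mem_filter.1 hj).2).le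
      (not_le.1 (Finset.mem_filter.1 hk).2).le

def frame (L : E2 ≃ₗᵢ[ℝ] E2) : OrthonormalBasis (Fin 2) ℝ E2 :=
  (EuclideanSpace.basisFun (Fin 2) ℝ).map L

theorem frame_apply (L : E2 ≃ₗᵢ[ℝ] E2) (k : Fin 2) : frame L k = L (EuclideanSpace.single k 1) := by
  simp [frame]

section Rectangle

variable (L L' : E2 ≃ₗᵢ[ℝ] E2) (c c' : E2)

theorem image_subset_strip {s : Set E2} (k : Fin 2) {w : ℝ} (hs : ∀ y ∈ s, y k ∈ Icc 0 w) :
    (fun x => L x + c) '' s ⊆ strip (frame L k) ⟪frame L k, c⟫ w := by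
  rintro _ ⟨y, hy, rfl⟩
  have hinner : ⟪frame L k, L y + c⟫ = y k + ⟪frame L k, c⟫ := by
    rw [inner_add_right, frame_apply, LinearIsometryEquiv.inner_map_map,
      EuclideanSpace.inner_single_left]
    simp
  simp only [strip, mem_ofPred_eq, hinner, mem_Icc]
  constructor <;> linarith [(hs y hy).1, (hs y hy).2]

theorem volume_image_baseRect_le {α₁ α₂ : ℝ} (hα₁ : 0 ≤ α₁) :
    volume ((fun x => L x + c) '' baseRect α₁ α₂) ≤ ENNReal.ofReal (α₁ * α₂) := by
  have hb := (frame L).orthonormal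
  have hcross : |cross (frame L 0) (frame L 1)| = 1 := by
    rw [abs_cross_eq_sin_uangle (hb.1 0) (hb.1 1), uangle_of_norm_eq_one (hb.1 0) (hb.1 1),
      hb.2 (by decide : (0 : Fin 2) ≠ 1), abs_zero, arccos_zero, sin_pi_div_two]
  calc volume ((fun x => L x + c) '' baseRect α₁ α₂)
      ≤ volume (strip (frame L 0) ⟪frame L 0, c⟫ α₁ ∩ strip (frame L 1) ⟪frame L 1, c⟫ α₂) :=
        measure_mono (subset_inter (image_subset_strip L c 0 fun y hy => hy.1)
          (image_subset_strip L c 1 fun y hy => hy.2))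
    _ = ENNReal.ofReal (α₁ * α₂) := by
        rw [volume_strip_inter_strip (abs_pos.1 (hcross ▸ one_pos)) hα₁, hcross, div_one]

theorem volume_inter_image_baseRect_le {α₁ α₂ : ℝ} (hα₂ : 0 ≤ α₂)
    (hθ : 0 < uangle (frame L 0) (frame L' 0)) :
    volume ((fun x => L x + c) '' baseRect α₁ α₂ ∩ (fun x => L' x + c') '' baseRect α₁ α₂) ≤
      ENNReal.ofReal (π / 2 * α₂ ^ 2 / uangle (frame L 0) (frame L' 0)) := by
  set θ := uangle (frame L 0) (frame L' 0)
  have hsin : |cross (frame L 1) (frame L' 1)| = sin θ := by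
    rw [abs_cross_eq_sin_uangle ((frame L).orthonormal.1 1) ((frame L').orthonormal.1 1),
      uangle_basis_one_eq_basis_zero]
  have hsin_pos : 0 < sin θ :=
    sin_pos_of_pos_of_lt_pi hθ (by linarith [uangle_le_pi_div_two (frame L 0) (frame L' 0), pi_pos])
  calc volume ((fun x => L x + c) '' baseRect α₁ α₂ ∩ (fun x => L' x + c') '' baseRect α₁ α₂)
      ≤ volume (strip (frame L 1) ⟪frame L 1, c⟫ α₂ ∩ strip (frame L' 1) ⟪frame L' 1, c'⟫ α₂) :=
        measure_mono (inter_subset_inter (image_subset_strip L c 1 fun y hy => hy.2)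
          (image_subset_strip L' c' 1 fun y hy => hy.2))
    _ = ENNReal.ofReal (α₂ ^ 2 / sin θ) := by
        rw [volume_strip_inter_strip (abs_pos.1 (hsin ▸ hsin_pos)) hα₂, hsin, sq]
    _ ≤ ENNReal.ofReal (π / 2 * α₂ ^ 2 / θ) := by
        refine ENNReal.ofReal_le_ofReal ?_
        calc α₂ ^ 2 / sin θ ≤ α₂ ^ 2 / (2 / π * θ) :=
              div_le_div_of_nonneg_left (by positivity) (by positivity)
                (mul_le_sin hθ.le (uangle_le_pi_div_two _ _))
          _ = π / 2 * α₂ ^ 2 / θ := by field_simp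

end Rectangle

theorem one_add_pi_mul_one_add_log_le {t : ℝ} (ht : 1 ≤ t) :
    1 + π * (1 + log (π / 2 * t)) ≤ 2 * √2 * π * log (2 * π * t) := by
  have hu : 0 ≤ log (π / 2 * t) := log_nonneg (by nlinarith [pi_gt_three])
  have hsplit : log (2 * π * t) = 2 * log 2 + log (π / 2 * t) := by
    rw [show 2 * π * t = 2 ^ 2 * (π / 2 * t) by ring, log_mul (by positivity) (by positivity),
      log_pow, Nat.cast_ofNat]
  have hsqrt : 1.414 ≤ √2 := le_sqrt_of_sq_le (by norm_num)
  have hlog2 := log_two_gt_d9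
  have hπ := pi_gt_three
  rw [hsplit]
  nlinarith [mul_le_mul_of_nonneg_left hsqrt pi_pos.le, mul_nonneg pi_pos.le hu,
    mul_nonneg (mul_nonneg pi_pos.le hu) (sub_nonneg.2 hsqrt)]

theorem add_pi_div_two_mul_sq_mul_le {α₁ α₂ S : ℝ} (hα₂ : 0 < α₂) (hα : α₂ < α₁)
    (hS : S ≤ 2 * ((1 + log (π / 2 / (α₂ / α₁))) / (α₂ / α₁))) :
    α₁ * α₂ + π / 2 * α₂ ^ 2 * S ≤ 2 * √2 * π * α₁ * α₂ * log (2 * π * α₁ / α₂) := by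
  have hα₁ : 0 < α₁ := hα₂.trans hα
  calc α₁ * α₂ + π / 2 * α₂ ^ 2 * S
      ≤ α₁ * α₂ + π / 2 * α₂ ^ 2 * (2 * ((1 + log (π / 2 / (α₂ / α₁))) / (α₂ / α₁))) := by gcongr
    _ = α₁ * α₂ * (1 + π * (1 + log (π / 2 * (α₁ / α₂)))) := by field_simp
    _ ≤ α₁ * α₂ * (2 * √2 * π * log (2 * π * (α₁ / α₂))) := by
      gcongr
      exact one_add_pi_mul_one_add_log_le ((one_le_div hα₂).2 hα.le)
    _ = 2 * √2 * π * α₁ * α₂ * log (2 * π * α₁ / α₂) := by ring_nf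

/-- If `R 1, …, R M` are rectangles of size `α₁ × α₂` (images of `[0,α₁] × [0,α₂]` under rigid
motions `x ↦ L i x + b i`), any two of which make an angle at least `α₂/α₁` between their long
sides, then for every fixed `i`,
`Σ_j 𝓛²(R i ∩ R j) ≤ 2 √2 π α₁ α₂ log(2π α₁/α₂)`. -/
theorem sum_intersection_rectangles (M : ℕ) (α₁ α₂ : ℝ) (hα₂ : 0 < α₂) (hα : α₂ < α₁)
    (L : Fin M → (E2 ≃ₗᵢ[ℝ] E2)) (b : Fin M → E2) (R : Fin M → Set E2)
    (hR : ∀ i, R i = (fun x => L i x + b i) '' baseRect α₁ α₂)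
    (hangle : ∀ i j, i ≠ j →
      α₂ / α₁ ≤ uangle (L i (EuclideanSpace.single 0 1)) (L j (EuclideanSpace.single 0 1))) :
    ∀ i, ∑ j : Fin M, volume (R i ∩ R j) ≤
      ENNReal.ofReal (2 * Real.sqrt 2 * π * α₁ * α₂ * Real.log (2 * π * α₁ / α₂)) := by
  intro i
  have hα₁ : 0 < α₁ := hα₂.trans hα
  have hδ : 0 < α₂ / α₁ := div_pos hα₂ hα₁
  have hsep : ∀ j k, j ≠ k → α₂ / α₁ ≤ uangle (frame (L j) 0) (frame (L k) 0) := by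
    simpa only [frame_apply] using hangle
  set θ : Fin M → ℝ := fun j => uangle (frame (L i) 0) (frame (L j) 0)
  set s := Finset.univ.erase i
  have hθ : ∀ j ∈ s, α₂ / α₁ ≤ θ j := fun j hj => hsep i j (Finset.ne_of_mem_erase hj).symm
  have hsum := sum_inv_uangle_le (frame (L i)) (fun j => (frame (L j)).orthonormal.1 0) s hδ
    (((div_lt_one hα₁).2 hα).le.trans (by linarith [pi_gt_three])) hθ fun j _ k _ => hsep j k
  have hterm_nonneg : ∀ j, 0 ≤ π / 2 * α₂ ^ 2 / θ j := fun j => by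
    have := uangle_nonneg (frame (L i) 0) (frame (L j) 0)
    positivity
  rw [← Finset.add_sum_erase _ _ (Finset.mem_univ i)]
  calc _ ≤ ENNReal.ofReal (α₁ * α₂) + ∑ j ∈ s, ENNReal.ofReal (π / 2 * α₂ ^ 2 / θ j) := by
        gcongr with j hj
        · rw [inter_self, hR]; exact volume_image_baseRect_le _ _ hα₁.le
        · rw [hR, hR]; exact volume_inter_image_baseRect_le _ _ _ _ hα₂.le (hδ.trans_le (hθ j hj))
    _ = ENNReal.ofReal (α₁ * α₂ + π / 2 * α₂ ^ 2 * ∑ j ∈ s, (θ j)⁻¹) := by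
        rw [← ENNReal.ofReal_sum_of_nonneg fun j _ => hterm_nonneg j,
          ← ENNReal.ofReal_add (by positivity) (Finset.sum_nonneg fun j _ => hterm_nonneg j),
          Finset.mul_sum]
        simp only [div_eq_mul_inv]
    _ ≤ _ := ENNReal.ofReal_le_ofReal (add_pi_div_two_mul_sq_mul_le hα₂ hα hsum)

end
end

section
/- Let a, b, c, d > 0 be real numbers and define g : ℝ → ℝ by g(s) = log((c + d·e^s)/(a + b·e^s)). Then for every s ∈ ℝ, |g'(s)| = |ad − bc|·e^s/((a + b·e^s)(c + d·e^s)), this quantity attains its maximum at s₀ = (1/2)·log(ac/(bd)), and the maximum value equals |ad − bc|/(ad + bc + 2·√(abcd)), which is strictly less than 1. -/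
/-!
Writing `t = eˢ`, the derivative is `(ad − bc) · t / ((a + bt)(c + dt))`, and
`(a + bt)(c + dt) / t = ad + bc + ac/t + bd·t ≥ ad + bc + 2√(abcd)` by AM–GM, with equality
exactly when `bd·t² = ac`, i.e. at `t₀ = √(ac/(bd)) = e^{s₀}`. The bound `< 1` is
`|ad − bc| < ad + bc`.
-/

open Real

theorem hasDerivAt_log_div_affine_exp {a b c d : ℝ} (s : ℝ) (hab : a + b * exp s ≠ 0)
    (hcd : c + d * exp s ≠ 0) :
    HasDerivAt (fun s ↦ log ((c + d * exp s) / (a + b * exp s)))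
      ((a * d - b * c) * exp s / ((a + b * exp s) * (c + d * exp s))) s := by
  have hnum := ((hasDerivAt_exp s).const_mul d).const_add c
  have hden := ((hasDerivAt_exp s).const_mul b).const_add a
  have hquot : HasDerivAt (fun s ↦ (c + d * exp s) / (a + b * exp s))
      ((d * exp s * (a + b * exp s) - (c + d * exp s) * (b * exp s)) / (a + b * exp s) ^ 2) s :=
    hnum.div hden hab
  convert hquot.log (div_ne_zero hcd hab) using 1
  field_simp
  ring

theorem two_mul_sqrt_mul_mul_le_add_mul_sq {p q : ℝ} (hp : 0 ≤ p) (hq : 0 ≤ q) (t : ℝ) :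
    2 * √(p * q) * t ≤ p + q * t ^ 2 := by
  have hsq := sq_nonneg (√p - √q * t)
  rw [sqrt_mul hp]
  nlinarith [sq_sqrt hp, sq_sqrt hq]

section AffineProduct

variable {a b c d : ℝ} (ha : 0 < a) (hb : 0 < b) (hc : 0 < c) (hd : 0 < d)
include ha hb hc hd

theorem div_mul_affine_le {t : ℝ} (ht : 0 < t) :
    t / ((a + b * t) * (c + d * t)) ≤ 1 / (a * d + b * c + 2 * √(a * b * c * d)) := by
  have hamgm := two_mul_sqrt_mul_mul_le_add_mul_sq (mul_pos ha hc).le (mul_pos hb hd).le t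
  rw [div_le_div_iff₀ (by positivity) (by positivity), show a * b * c * d = a * c * (b * d) by ring]
  nlinarith

theorem div_mul_affine_sqrt_eq :
    √(a * c / (b * d)) / ((a + b * √(a * c / (b * d))) * (c + d * √(a * c / (b * d)))) =
      1 / (a * d + b * c + 2 * √(a * b * c * d)) := by
  set t₀ := √(a * c / (b * d))
  have hx : 0 < a * c / (b * d) := by positivity
  have ht₀ : 0 < t₀ := sqrt_pos.2 hx
  have hsq : b * d * t₀ ^ 2 = a * c := by
    rw [sq_sqrt hx.le]
    field_simp
  have hsqrt : t₀ * √(a * b * c * d) = a * c := by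
    rw [← sqrt_mul hx.le, show a * c / (b * d) * (a * b * c * d) = (a * c) ^ 2 by field_simp,
      sqrt_sq (by positivity)]
  rw [div_eq_div_iff (by positivity) (by positivity)]
  linear_combination 2 * hsqrt - hsq

theorem abs_sub_mul_lt_add_add_two_sqrt :
    |a * d - b * c| < a * d + b * c + 2 * √(a * b * c * d) := by
  have hpos : 0 < √(a * b * c * d) := sqrt_pos.2 (by positivity)
  rw [abs_sub_lt_iff]
  constructor <;> nlinarith [mul_pos ha hd, mul_pos hb hc]

end AffineProduct

theorem exp_half_mul_log {x : ℝ} (hx : 0 < x) : exp (1 / 2 * log x) = √x := by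
  rw [one_div_mul_eq_div, exp_half, exp_log hx]

/-- The derivative of `g(s) = log((c + d eˢ)/(a + b eˢ))` equals
`(ad − bc) eˢ / ((a + b eˢ)(c + d eˢ))` in absolute value, is maximized at
`s₀ = ½ log(ac/(bd))`, and the maximum value `|ad − bc|/(ad + bc + 2√(abcd))` is
strictly less than `1`. -/
theorem deriv_log_mobius_exp (a b c d : ℝ) (ha : 0 < a) (hb : 0 < b) (hc : 0 < c)
    (hd : 0 < d) :
    (∀ s : ℝ,
      |deriv (fun s : ℝ => Real.log ((c + d * Real.exp s) / (a + b * Real.exp s))) s| =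
        |a * d - b * c| * Real.exp s / ((a + b * Real.exp s) * (c + d * Real.exp s))) ∧
    (∀ s : ℝ,
      |deriv (fun s : ℝ => Real.log ((c + d * Real.exp s) / (a + b * Real.exp s))) s| ≤
        |deriv (fun s : ℝ => Real.log ((c + d * Real.exp s) / (a + b * Real.exp s)))
          ((1 / 2) * Real.log (a * c / (b * d)))|) ∧
    |deriv (fun s : ℝ => Real.log ((c + d * Real.exp s) / (a + b * Real.exp s)))
        ((1 / 2) * Real.log (a * c / (b * d)))| =
      |a * d - b * c| / (a * d + b * c + 2 * Real.sqrt (a * b * c * d)) ∧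
    |a * d - b * c| / (a * d + b * c + 2 * Real.sqrt (a * b * c * d)) < 1 := by
  have habs_deriv (s : ℝ) :
      |deriv (fun s ↦ log ((c + d * exp s) / (a + b * exp s))) s| =
        |a * d - b * c| * exp s / ((a + b * exp s) * (c + d * exp s)) := by
    have hab : 0 < a + b * exp s := by positivity
    have hcd : 0 < c + d * exp s := by positivity
    rw [(hasDerivAt_log_div_affine_exp s hab.ne' hcd.ne').deriv, abs_div, abs_mul,
      abs_of_pos (exp_pos s), abs_of_pos (mul_pos hab hcd)]
  have hmax : |deriv (fun s ↦ log ((c + d * exp s) / (a + b * exp s)))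
      (1 / 2 * log (a * c / (b * d)))| = |a * d - b * c| / (a * d + b * c + 2 * √(a * b * c * d)) := by
    rw [habs_deriv, exp_half_mul_log (by positivity), mul_div_assoc,
      div_mul_affine_sqrt_eq ha hb hc hd, mul_one_div]
  refine ⟨habs_deriv, fun s ↦ ?_, hmax, ?_⟩
  · rw [hmax, habs_deriv, mul_div_assoc, ← mul_one_div |a * d - b * c|]
    exact mul_le_mul_of_nonneg_left (div_mul_affine_le ha hb hc hd (exp_pos s)) (abs_nonneg _)
  · exact (div_lt_one (by positivity)).2 (abs_sub_mul_lt_add_add_two_sqrt ha hb hc hd)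
end

section
/- Let I = {1,…,κ} with κ ≥ 2, and for each i ∈ I let A_i ∈ ℝ^{2×2} be invertible with ‖A_i‖ ≤ ᾱ < 1 and let a_i ∈ ℝ². Let E be the attractor of the affine IFS Φ = {f_i(x) = A_i x + a_i}, and set x_i = a_i + Σ_{n≥0} A_i A₁ⁿ a₁ and y_i = a_i + Σ_{n≥0} A_i A_κⁿ a_κ for i ∈ I (the fixed-point images π(i1^∞), π(iκ^∞)). Define M ∈ ℝ^{κ×κ} by M_{ij} = 1 if the open segments (x_i, y_i) and (x_j, y_j) intersect in exactly one point, and M_{ij} = 0 otherwise. If M is irreducible (for all i, j there exists n > 0 with (M^n)_{ij} > 0), then there exist ε > 0 and ϱ > 0 such that for every affine IFS Φ' = {x ↦ A_i' x + a_i'} with each A_i' an invertible contraction and all entries of A_i − A_i' and a_i − a_i' of absolute value less than ε, the attractor E' of Φ' satisfies: for every unit vector e ∈ ℝ², {x·e : x ∈ E'} is an interval of length at least ϱ. -/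
/-!
For a perturbed system with attractor `E'`, let `p, q ∈ E'` be the fixed points of `f₁, f_κ` and
`φ` a linear functional. `φ(E')` is the union of the projections of the pieces `fᵢ(E')`, whose
convex hulls meet whenever the segments `[fᵢ p, fᵢ q]` and `[fⱼ p, fⱼ q]` do. Irreducibility of
`M` makes this intersection graph connected, so the hulls of the pieces form a connected chain of
intervals covering the hull of `φ(E')`. Iterating inside the pieces, every point of that hull lies
within `‖φ‖ · diam E' · βⁿ` of `φ(E')`, where `β < 1` bounds the linear parts; hence `φ(E')` is an
interval.

Two open segments in the plane meeting in exactly one point cross transversally, so closed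
segments with nearby endpoints still meet; since `fᵢ p` and `fᵢ q` depend continuously on the
system, this persists under small perturbations. A transversal pair also yields two non-parallel
segments with endpoints in `E'`, whose projections bound the length of `φ(E')` from below,
uniformly in the direction.
-/

open Set Matrix

noncomputable section

noncomputable def mLin (A : Matrix (Fin 2) (Fin 2) ℝ) : E2 →L[ℝ] E2 :=
  LinearMap.toContinuousLinearMap (Matrix.toEuclideanLin A)

/-- largest singular value = operator norm -/
noncomputable def a1 (A : Matrix (Fin 2) (Fin 2) ℝ) : ℝ := ‖mLin A‖

open Filter Topology Metric Relation Function
open scoped RealInnerProductSpace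

lemma ContinuousLinearMap.lipschitzWith_add_const {E F : Type*} [NormedAddCommGroup E]
    [NormedSpace ℝ E] [NormedAddCommGroup F] [NormedSpace ℝ F] (L : E →L[ℝ] F) (c : F) :
    LipschitzWith ‖L‖₊ (fun v => L v + c) :=
  LipschitzWith.of_dist_le_mul fun v w => by
    rw [dist_add_right]
    exact L.lipschitz.dist_le_mul v w

section ProjectionsOfAttractors

variable {E ι : Type*} [NormedAddCommGroup E] [NormedSpace ℝ E]

lemma mapsTo_convexHull_Icc_sInf_sSup (φ : E →L[ℝ] ℝ) (c : ℝ) {X : Set E} (hX : IsCompact X) :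
    MapsTo (fun v => φ v + c) (convexHull ℝ X)
      (Icc (sInf ((fun v => φ v + c) '' X)) (sSup ((fun v => φ v + c) '' X))) := by
  have hbdd := (hX.image (f := fun v => φ v + c) (by fun_prop)).isBounded
  exact convexHull_min (fun v hv => hbdd.subset_Icc_sInf_sSup (mem_image_of_mem _ hv))
    ((convex_Icc _ _).affine_preimage (φ.toLinearMap.toAffineMap + AffineMap.const ℝ E c))

variable {L : ι → E →L[ℝ] E} {b : ι → E} {K : Set E}

theorem infDist_image_le_of_mem_Icc (hK : IsCompact K) (hne : K.Nonempty)
    (hKeq : K = ⋃ i, (fun v => L i v + b i) '' K)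
    (hlink : ∀ i j, ReflTransGen (fun i j => (convexHull ℝ ((fun v => L i v + b i) '' K) ∩
      convexHull ℝ ((fun v => L j v + b j) '' K)).Nonempty) i j)
    {β : ℝ} (hL : ∀ i, ‖L i‖ ≤ β) (n : ℕ) (φ : E →L[ℝ] ℝ) (c : ℝ) {z : ℝ}
    (hz : z ∈ Icc (sInf ((fun v => φ v + c) '' K)) (sSup ((fun v => φ v + c) '' K))) :
    infDist z ((fun v => φ v + c) '' K) ≤ ‖φ‖ * diam K * β ^ n := by
  induction n generalizing φ c z with
  | zero =>
    set S := (fun v => φ v + c) '' K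
    have hS : IsCompact S := hK.image (by fun_prop)
    obtain ⟨w, hw⟩ : S.Nonempty := hne.image _
    calc infDist z S ≤ dist z w := infDist_le_dist_of_mem hw
      _ ≤ sSup S - sInf S := Real.dist_le_of_mem_Icc hz (hS.isBounded.subset_Icc_sInf_sSup hw)
      _ = diam S := (Real.diam_eq hS.isBounded).symm
      _ ≤ ‖φ‖₊ * diam K := (φ.lipschitzWith_add_const c).diam_image_le K hK.isBounded
      _ = ‖φ‖ * diam K * β ^ 0 := by simp
  | succ n ih =>
    set ψ := fun v => φ v + c
    set S := ψ '' K
    set J := fun i => Icc (sInf (ψ '' ((fun v => L i v + b i) '' K)))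
      (sSup (ψ '' ((fun v => L i v + b i) '' K)))
    have hS : IsCompact S := hK.image (by fun_prop)
    have hpiece (i : ι) : IsCompact ((fun v => L i v + b i) '' K) := hK.image (by fun_prop)
    have hSJ : S ⊆ ⋃ i, J i := by
      rw [show S = ⋃ i, ψ '' ((fun v => L i v + b i) '' K) by rw [← image_iUnion, ← hKeq]]
      exact iUnion_mono fun i => ((mapsTo_convexHull_Icc_sInf_sSup φ c (hpiece i)).mono_left
        (subset_convexHull ℝ _)).image_subset
    -- the intervals `J i` form a connected chain, so one of them contains `z`
    have hJ : OrdConnected (⋃ i, J i) := by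
      refine (IsPreconnected.iUnion_of_reflTransGen (fun i => isPreconnected_Icc) fun i j =>
        ReflTransGen.mono (fun i j ⟨w, hwi, hwj⟩ => ⟨ψ w, ?_, ?_⟩) _ _ (hlink i j)).ordConnected
      exacts [mapsTo_convexHull_Icc_sInf_sSup φ c (hpiece i) hwi,
        mapsTo_convexHull_Icc_sInf_sSup φ c (hpiece j) hwj]
    obtain ⟨i, hzi⟩ := mem_iUnion.mp <|
      hJ.out (hSJ (hS.sInf_mem (hne.image _))) (hSJ (hS.sSup_mem (hne.image _))) hz
    have hψi : ψ '' ((fun v => L i v + b i) '' K) =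
        (fun v => φ.comp (L i) v + (φ (b i) + c)) '' K := by
      rw [image_image]
      simp only [ψ, map_add, ContinuousLinearMap.comp_apply, add_assoc]
    replace hzi : z ∈ Icc (sInf ((fun v => φ.comp (L i) v + (φ (b i) + c)) '' K))
        (sSup ((fun v => φ.comp (L i) v + (φ (b i) + c)) '' K)) := by
      simpa only [J, hψi] using hzi
    have hβ : 0 ≤ β := (norm_nonneg _).trans (hL i)
    calc infDist z S ≤ infDist z (ψ '' ((fun v => L i v + b i) '' K)) :=
          infDist_le_infDist_of_subset (image_mono ((subset_iUnion _ i).trans hKeq.superset))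
            ((hne.image _).image _)
      _ ≤ ‖φ.comp (L i)‖ * diam K * β ^ n := hψi ▸ ih _ _ hzi
      _ ≤ ‖φ‖ * β * diam K * β ^ n := by
          gcongr
          exact (φ.opNorm_comp_le _).trans (by gcongr; exact hL i)
      _ = ‖φ‖ * diam K * β ^ (n + 1) := by ring

theorem convex_image_of_reflTransGen [Finite ι] (hK : IsCompact K) (hne : K.Nonempty)
    (hKeq : K = ⋃ i, (fun v => L i v + b i) '' K)
    (hlink : ∀ i j, ReflTransGen (fun i j => (convexHull ℝ ((fun v => L i v + b i) '' K) ∩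
      convexHull ℝ ((fun v => L j v + b j) '' K)).Nonempty) i j)
    (hL : ∀ i, ‖L i‖ < 1) (φ : E →L[ℝ] ℝ) : Convex ℝ (φ '' K) := by
  have : Nonempty ι := by
    obtain ⟨v, hv⟩ := hne
    rw [hKeq, mem_iUnion] at hv
    exact ⟨hv.choose⟩
  obtain ⟨i₀, hi₀⟩ := Finite.exists_max fun i => ‖L i‖
  have hS : IsCompact (φ '' K) := hK.image φ.continuous
  have hIcc : Icc (sInf (φ '' K)) (sSup (φ '' K)) ⊆ φ '' K := by
    intro z hz
    have hbound (n : ℕ) : infDist z (φ '' K) ≤ ‖φ‖ * diam K * ‖L i₀‖ ^ n := by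
      simpa only [add_zero] using
        infDist_image_le_of_mem_Icc hK hne hKeq hlink hi₀ n φ 0 (by simpa only [add_zero] using hz)
    have hlim : Tendsto (fun n => ‖φ‖ * diam K * ‖L i₀‖ ^ n) atTop (𝓝 0) := by
      simpa using (tendsto_pow_atTop_nhds_zero_of_lt_one (norm_nonneg _) (hL i₀)).const_mul
        (‖φ‖ * diam K)
    exact (hS.isClosed.mem_iff_infDist_zero (hne.image _)).2
      (le_antisymm (ge_of_tendsto' hlim hbound) infDist_nonneg)
  rw [hS.isBounded.subset_Icc_sInf_sSup.antisymm hIcc]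
  exact convex_Icc _ _

end ProjectionsOfAttractors

section AffineFixedPoint

variable {E : Type*} [NormedAddCommGroup E] [NormedSpace ℝ E] [CompleteSpace E]

/-- A junk value unless `1 - L` is invertible. -/
def affineFixedPoint (L : E →L[ℝ] E) (c : E) : E := Ring.inverse (1 - L) c

lemma ContinuousAt.affineFixedPoint {α : Type*} [TopologicalSpace α] {L : α → E →L[ℝ] E}
    {c : α → E} {θ₀ : α} (hL : ContinuousAt L θ₀) (hc : ContinuousAt c θ₀) (h : ‖L θ₀‖ < 1) :
    ContinuousAt (fun θ => affineFixedPoint (L θ) (c θ)) θ₀ :=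
  ((NormedRing.inverse_continuousAt (Units.oneSub (L θ₀) h)).comp_of_eq
    (continuousAt_const.sub hL) (Units.val_oneSub _ h).symm).clm_apply hc

variable {L : E →L[ℝ] E} (hL : ‖L‖ < 1)
include hL

lemma affineFixedPoint_isFixedPt (c : E) :
    IsFixedPt (fun v => L v + c) (affineFixedPoint L c) := by
  have h : affineFixedPoint L c - L (affineFixedPoint L c) = c := by
    simpa [affineFixedPoint] using
      congrArg (· c) (Ring.mul_inverse_cancel (1 - L) (Units.oneSub L hL).isUnit)
  exact (sub_eq_iff_eq_add'.mp h).symm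

lemma hasSum_pow_apply_affineFixedPoint (c : E) :
    HasSum (fun n => (L ^ n) c) (affineFixedPoint L c) := by
  rw [affineFixedPoint, NormedRing.inverse_one_sub L hL]
  exact (summable_geometric_of_norm_lt_one hL).hasSum.mapL (ContinuousLinearMap.apply ℝ E c)

lemma affineFixedPoint_mem (c : E) {K : Set E} (hK : IsClosed K) (hne : K.Nonempty)
    (hKc : MapsTo (fun v => L v + c) K K) : affineFixedPoint L c ∈ K := by
  have hf : ContractingWith ‖L‖₊ (fun v => L v + c) :=
    ⟨by exact_mod_cast hL, L.lipschitzWith_add_const c⟩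
  obtain ⟨y, hy, hfy, -⟩ := (hf.restrict hKc).exists_fixedPoint' hK.isComplete hKc hne.some_mem
    (edist_ne_top _ _)
  rwa [hf.fixedPoint_unique' (affineFixedPoint_isFixedPt hL c) hfy]

end AffineFixedPoint

lemma segment_diff_pair_eq_openSegment {F : Type*} [AddCommGroup F] [Module ℝ F] {x y : F}
    (h : x ≠ y) : segment ℝ x y \ {x, y} = openSegment ℝ x y := by
  rw [← insert_endpoints_openSegment, insert_sdiff_of_mem _ (mem_insert x _),
    insert_sdiff_of_mem _ (mem_insert_of_mem x (mem_singleton y)), sdiff_eq_left, disjoint_left]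
  rintro z hz (rfl | rfl)
  exacts [h (left_mem_openSegment_iff.mp hz), h (right_mem_openSegment_iff.mp hz)]

def det2 (u v : E2) : ℝ := u 0 * v 1 - u 1 * v 0

lemma Filter.Tendsto.det2 {α : Type*} {l : Filter α} {U V : α → E2} {u v : E2}
    (hU : Tendsto U l (𝓝 u)) (hV : Tendsto V l (𝓝 v)) :
    Tendsto (fun a => det2 (U a) (V a)) l (𝓝 (det2 u v)) :=
  ((by unfold _root_.det2; fun_prop : Continuous fun p : E2 × E2 => _root_.det2 p.1 p.2).tendsto
    (u, v)).comp (hU.prodMk_nhds hV)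

lemma det2_smul_eq_add (u v w : E2) : det2 u v • w = det2 w v • u + det2 u w • v := by
  ext i
  fin_cases i <;> simp [det2] <;> ring

lemma det2_sub_smul (s t : ℝ) (u v : E2) :
    det2 (s • u - t • v) v = s * det2 u v ∧ det2 u (s • u - t • v) = -(t * det2 u v) := by
  constructor <;> simp only [det2, PiLp.sub_apply, PiLp.smul_apply, smul_eq_mul] <;> ring

lemma eq_smul_of_det2_eq_zero {u v : E2} (hu : u ≠ 0) (h : det2 u v = 0) :
    v = ((u 0 * v 0 + u 1 * v 1) / (u 0 ^ 2 + u 1 ^ 2)) • u := by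
  have hu' : u 0 ^ 2 + u 1 ^ 2 ≠ 0 := by
    contrapose! hu
    ext i
    fin_cases i <;> simp <;> nlinarith [sq_nonneg (u 0), sq_nonneg (u 1)]
  unfold det2 at h
  ext i
  fin_cases i <;> simp <;> field_simp
  · linear_combination (-(u 1)) * h
  · linear_combination u 0 * h

lemma eq_zero_of_inner_eq_zero_of_det2_ne_zero {u v e : E2} (h : det2 u v ≠ 0)
    (hu : ⟪u, e⟫ = 0) (hv : ⟪v, e⟫ = 0) : e = 0 := by
  simp only [PiLp.inner_apply, Fin.sum_univ_two, RCLike.inner_apply, conj_trivial] at hu hv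
  unfold det2 at h
  ext i
  fin_cases i
  · exact (mul_eq_zero.mp (by linear_combination v 1 * hu - u 1 * hv :
      (u 0 * v 1 - u 1 * v 0) * e 0 = 0)).resolve_left h
  · exact (mul_eq_zero.mp (by linear_combination u 0 * hv - v 0 * hu :
      (u 0 * v 1 - u 1 * v 0) * e 1 = 0)).resolve_left h

def CrossTransversally (x₁ y₁ x₂ y₂ : E2) : Prop :=
  ∃ s ∈ Ioo (0 : ℝ) 1, ∃ t ∈ Ioo (0 : ℝ) 1,
    x₁ + s • (y₁ - x₁) = x₂ + t • (y₂ - x₂) ∧ det2 (y₁ - x₁) (y₂ - x₂) ≠ 0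

lemma crossTransversally_of_inter_eq_singleton {x₁ y₁ x₂ y₂ : E2}
    (h : ∃ p : E2, (segment ℝ x₁ y₁ \ {x₁, y₁}) ∩ (segment ℝ x₂ y₂ \ {x₂, y₂}) = {p}) :
    CrossTransversally x₁ y₁ x₂ y₂ := by
  obtain ⟨p, hp⟩ := h
  have hne {x y : E2} (hp : p ∈ segment ℝ x y \ {x, y}) : x ≠ y := by
    rintro rfl
    simp_all [segment_same]
  obtain ⟨hp₁, hp₂⟩ := hp.superset (mem_singleton p)
  have hxy₁ := hne hp₁
  have hxy₂ := hne hp₂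
  rw [segment_diff_pair_eq_openSegment hxy₁, segment_diff_pair_eq_openSegment hxy₂] at hp
  rw [segment_diff_pair_eq_openSegment hxy₁, openSegment_eq_image'] at hp₁
  rw [segment_diff_pair_eq_openSegment hxy₂, openSegment_eq_image'] at hp₂
  obtain ⟨s, hs, rfl⟩ := hp₁
  obtain ⟨t, ht, hpt⟩ := hp₂
  refine ⟨s, hs, t, ht, hpt.symm, fun hd => ?_⟩
  set u := y₁ - x₁
  set v := y₂ - x₂
  have hu : u ≠ 0 := sub_ne_zero.2 hxy₁.symm
  obtain ⟨μ, hvu⟩ : ∃ μ : ℝ, v = μ • u := ⟨_, eq_smul_of_det2_eq_zero hu hd⟩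
  have hμ : μ ≠ 0 := by
    rintro rfl
    exact sub_ne_zero.2 hxy₂.symm (hvu.trans (zero_smul ℝ u))
  -- parallel segments overlapping at an interior point overlap along a whole interval
  have hev : ∀ᶠ r in 𝓝[≠] (0 : ℝ), (s + r ∈ Ioo 0 1 ∧ t + r / μ ∈ Ioo 0 1) ∧ r ≠ 0 :=
    ((((continuous_const.add continuous_id).tendsto' 0 s (add_zero s)).eventually
      (isOpen_Ioo.mem_nhds hs)).and
    (((continuous_const.add (continuous_id.div_const μ)).tendsto' 0 t (by simp)).eventually
      (isOpen_Ioo.mem_nhds ht))).filter_mono nhdsWithin_le_nhds |>.and self_mem_nhdsWithin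
  obtain ⟨r, ⟨hsr, htr⟩, hr⟩ := hev.exists
  have hmem : x₁ + (s + r) • u ∈ ({x₁ + s • u} : Set E2) := by
    rw [← hp, openSegment_eq_image', openSegment_eq_image']
    refine ⟨⟨s + r, hsr, rfl⟩, t + r / μ, htr, ?_⟩
    change x₂ + (t + r / μ) • v = _
    dsimp only at hpt
    rw [add_smul, ← add_assoc, hpt, hvu, smul_smul, div_mul_cancel₀ r hμ, add_assoc, ← add_smul]
  rw [mem_singleton_iff, add_right_inj, add_smul, add_eq_left, smul_eq_zero] at hmem
  exact hmem.elim hr hu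

lemma CrossTransversally.eventually_segment_inter_nonempty {x₁ y₁ x₂ y₂ : E2}
    (h : CrossTransversally x₁ y₁ x₂ y₂) {α : Type*} {l : Filter α} {X₁ Y₁ X₂ Y₂ : α → E2}
    (hX₁ : Tendsto X₁ l (𝓝 x₁)) (hY₁ : Tendsto Y₁ l (𝓝 y₁))
    (hX₂ : Tendsto X₂ l (𝓝 x₂)) (hY₂ : Tendsto Y₂ l (𝓝 y₂)) :
    ∀ᶠ a in l, (segment ℝ (X₁ a) (Y₁ a) ∩ segment ℝ (X₂ a) (Y₂ a)).Nonempty := by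
  obtain ⟨s, hs, t, ht, heq, hd⟩ := h
  have hw : x₂ - x₁ = s • (y₁ - x₁) - t • (y₂ - x₂) := by
    linear_combination (norm := module) -heq
  have hD := (hY₁.sub hX₁).det2 (hY₂.sub hX₂)
  -- Cramer's rule for the crossing parameters
  have hS := ((hX₂.sub hX₁).det2 (hY₂.sub hX₂)).div hD hd
  rw [hw, (det2_sub_smul _ _ _ _).1, mul_div_cancel_right₀ _ hd] at hS
  have hT := ((hY₁.sub hX₁).det2 (hX₂.sub hX₁)).neg.div hD hd
  rw [hw, (det2_sub_smul _ _ _ _).2, neg_neg, mul_div_cancel_right₀ _ hd] at hT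
  filter_upwards [hS.eventually (isOpen_Ioo.mem_nhds hs), hT.eventually (isOpen_Ioo.mem_nhds ht),
    hD.eventually_ne hd] with a hSa hTa hDa
  set u := Y₁ a - X₁ a with hu
  set v := Y₂ a - X₂ a with hv
  set w := X₂ a - X₁ a with hw
  set S := det2 w v / det2 u v
  set T := -det2 u w / det2 u v
  replace hSa : S ∈ Ioo 0 1 := hSa
  replace hTa : T ∈ Ioo 0 1 := hTa
  clear_value u v w
  have hwa : w = S • u - T • v := by
    apply smul_right_injective E2 hDa
    calc det2 u v • w = det2 w v • u + det2 u w • v := det2_smul_eq_add u v w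
      _ = (det2 u v * S) • u - (det2 u v * T) • v := by
        rw [mul_div_cancel₀ _ hDa, mul_div_cancel₀ _ hDa, neg_smul, sub_neg_eq_add]
      _ = det2 u v • (S • u - T • v) := by rw [smul_sub, smul_smul, smul_smul]
  refine ⟨X₁ a + S • u, ?_, ?_⟩
  · rw [segment_eq_image']
    exact ⟨S, Ioo_subset_Icc_self hSa, by rw [hu]⟩
  · rw [segment_eq_image']
    refine ⟨T, Ioo_subset_Icc_self hTa, ?_⟩
    dsimp only
    rw [← hv, ← sub_eq_iff_eq_add', add_sub_right_comm, ← hw, hwa, sub_add_cancel]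

lemma eventually_forall_segment_inter_nonempty {ι α : Type*} [Finite ι] {l : Filter α}
    {x y : ι → E2} {X Y : α → ι → E2} (hX : ∀ i, Tendsto (X · i) l (𝓝 (x i)))
    (hY : ∀ i, Tendsto (Y · i) l (𝓝 (y i))) :
    ∀ᶠ a in l, ∀ i j, (∃ p : E2, (segment ℝ (x i) (y i) \ {x i, y i}) ∩
      (segment ℝ (x j) (y j) \ {x j, y j}) = {p}) →
        (segment ℝ (X a i) (Y a i) ∩ segment ℝ (X a j) (Y a j)).Nonempty := by
  refine eventually_all.2 fun i => eventually_all.2 fun j => ?_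
  by_cases h : ∃ p : E2, (segment ℝ (x i) (y i) \ {x i, y i}) ∩
      (segment ℝ (x j) (y j) \ {x j, y j}) = {p}
  · filter_upwards [(crossTransversally_of_inter_eq_singleton h).eventually_segment_inter_nonempty
      (hX i) (hY i) (hX j) (hY j)] with a ha _ using ha
  · exact Eventually.of_forall fun _ h' => absurd h' h

lemma exists_pos_eventually_le_max_abs_inner {F : Type*} [NormedAddCommGroup F]
    [InnerProductSpace ℝ F] [FiniteDimensional ℝ F] {u v : F}
    (h : ∀ e, ⟪u, e⟫ = 0 → ⟪v, e⟫ = 0 → e = 0) {α : Type*} {l : Filter α} {U V : α → F}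
    (hU : Tendsto U l (𝓝 u)) (hV : Tendsto V l (𝓝 v)) :
    ∃ c > 0, ∀ᶠ a in l, ∀ e, ‖e‖ = 1 → c ≤ max |⟪U a, e⟫| |⟪V a, e⟫| := by
  obtain ⟨c, hc, hce⟩ := (isCompact_sphere (0 : F) 1).exists_forall_le'
    (f := fun e => max |⟪u, e⟫| |⟪v, e⟫|) (by fun_prop) (a := 0) fun e he => by
      by_contra! hle
      have he0 := h e (abs_nonpos_iff.mp ((le_max_left _ _).trans hle))
        (abs_nonpos_iff.mp ((le_max_right _ _).trans hle))
      simp [he0] at he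
  refine ⟨c / 2, half_pos hc, ?_⟩
  filter_upwards [hU (ball_mem_nhds u (half_pos hc)), hV (ball_mem_nhds v (half_pos hc))]
    with a hUa hVa e he
  have hclose {w w' : F} (hw : dist w' w < c / 2) : |⟪w, e⟫| - c / 2 ≤ |⟪w', e⟫| := by
    have := (abs_sub_abs_le_abs_sub ⟪w, e⟫ ⟪w', e⟫).trans
      ((inner_sub_left (𝕜 := ℝ) w w' e ▸ abs_real_inner_le_norm (w - w') e).trans_eq
        (by rw [he, mul_one]))
    rw [← dist_eq_norm, dist_comm] at this
    linarith
  rcases le_max_iff.mp (hce e (by simpa using he)) with hu | hv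
  · exact le_max_of_le_left (by linarith [hclose hUa])
  · exact le_max_of_le_right (by linarith [hclose hVa])

theorem convex_and_le_width_of_reflTransGen {F ι : Type*} [NormedAddCommGroup F]
    [InnerProductSpace ℝ F] [Finite ι] {L : ι → F →L[ℝ] F} {b : ι → F} (hL : ∀ i, ‖L i‖ < 1)
    {K : Set F} (hK : IsCompact K) (hne : K.Nonempty)
    (hKeq : K = ⋃ i, (fun v => L i v + b i) '' K) {p q : F} (hp : p ∈ K) (hq : q ∈ K)
    (hlink : ∀ i j, ReflTransGen (fun i j => (segment ℝ (L i p + b i) (L i q + b i) ∩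
      segment ℝ (L j p + b j) (L j q + b j)).Nonempty) i j)
    {e : F} {c : ℝ} {i₀ j₀ : ι}
    (hc : c ≤ max |⟪(L i₀ q + b i₀) - (L i₀ p + b i₀), e⟫|
      |⟪(L j₀ q + b j₀) - (L j₀ p + b j₀), e⟫|) :
    Convex ℝ {r : ℝ | ∃ v ∈ K, r = ⟪v, e⟫} ∧
      c ≤ sSup {r : ℝ | ∃ v ∈ K, r = ⟪v, e⟫} - sInf {r : ℝ | ∃ v ∈ K, r = ⟪v, e⟫} := by
  have hS : {r : ℝ | ∃ v ∈ K, r = ⟪v, e⟫} = innerSL ℝ e '' K := by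
    ext r
    simp [eq_comm, real_inner_comm]
  have hpiece (i : ι) : (fun v => L i v + b i) '' K ⊆ K := (subset_iUnion _ i).trans hKeq.superset
  have hseg (i : ι) : segment ℝ (L i p + b i) (L i q + b i) ⊆
      convexHull ℝ ((fun v => L i v + b i) '' K) :=
    segment_subset_convexHull (mem_image_of_mem _ hp) (mem_image_of_mem _ hq)
  have hbdd := (hK.image (innerSL ℝ e).continuous).isBounded
  have hwidth {v w : F} (hv : v ∈ K) (hw : w ∈ K) :
      |⟪w - v, e⟫| ≤ sSup (innerSL ℝ e '' K) - sInf (innerSL ℝ e '' K) := by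
    rw [← Real.diam_eq hbdd, real_inner_comm, inner_sub_right, ← Real.dist_eq]
    exact dist_le_diam_of_mem hbdd (mem_image_of_mem _ hw) (mem_image_of_mem _ hv)
  have hends (i : ι) :=
    hwidth (hpiece i (mem_image_of_mem _ hp)) (hpiece i (mem_image_of_mem _ hq))
  rw [hS]
  exact ⟨convex_image_of_reflTransGen hK hne hKeq (fun i j => ReflTransGen.mono
    (fun i j ⟨z, hzi, hzj⟩ => ⟨z, hseg i hzi, hseg j hzj⟩) _ _ (hlink i j)) hL _,
    hc.trans (max_le (hends i₀) (hends j₀))⟩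

lemma reflTransGen_of_pow_apply_pos {n : Type*} [Fintype n] [DecidableEq n]
    {R : n → n → Prop} {M : Matrix n n ℝ} (hM1 : ∀ i j, R i j → M i j = 1)
    (hM0 : ∀ i j, ¬R i j → M i j = 0) {k : ℕ} {i j : n} (h : 0 < (M ^ k) i j) :
    ReflTransGen R i j := by
  have hM (i j : n) : 0 ≤ M i j := by
    by_cases h : R i j
    exacts [(hM1 i j h).symm ▸ zero_le_one, (hM0 i j h).ge]
  let := toQuiver M
  obtain ⟨⟨p, -⟩⟩ := (pow_apply_pos_iff_nonempty_path hM k i j).1 h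
  clear h
  induction p with
  | nil => rfl
  | cons _ e ih => exact ih.tail (by_contra fun hR => (hM0 _ _ hR ▸ e.down).false)

lemma continuous_mLin : Continuous mLin :=
  LinearMap.continuous_of_finiteDimensional
    (toEuclideanCLM (n := Fin 2) (𝕜 := ℝ)).toAlgEquiv.toLinearMap

lemma hasSum_toEuclideanLin_mul_pow (A : Matrix (Fin 2) (Fin 2) ℝ) {B : Matrix (Fin 2) (Fin 2) ℝ}
    (hB : a1 B < 1) (c : E2) :
    HasSum (fun n => toEuclideanLin (A * B ^ n) c) (mLin A (affineFixedPoint (mLin B) c)) := by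
  convert (hasSum_pow_apply_affineFixedPoint hB c).mapL (mLin A) using 2 with n
  change toEuclideanCLM (𝕜 := ℝ) (A * B ^ n) c = _
  rw [map_mul, map_pow]
  rfl

/-- The sup metric on matrix entries and translation coordinates measures the entrywise closeness
of two systems. -/
def ifsParams {κ : ℕ} (A : Fin κ → Matrix (Fin 2) (Fin 2) ℝ) (a : Fin κ → E2) :
    (Fin κ → Fin 2 → Fin 2 → ℝ) × (Fin κ → Fin 2 → ℝ) :=
  (A, fun i => WithLp.ofLp (a i))

lemma dist_ifsParams_lt {κ : ℕ} {A A' : Fin κ → Matrix (Fin 2) (Fin 2) ℝ} {a a' : Fin κ → E2}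
    {ε : ℝ} (hε : 0 < ε) (hA : ∀ i r s, |A i r s - A' i r s| < ε)
    (ha : ∀ i r, |(a i - a' i) r| < ε) : dist (ifsParams A' a') (ifsParams A a) < ε := by
  refine max_lt ((dist_pi_lt_iff hε).2 fun i => (dist_pi_lt_iff hε).2 fun r =>
    (dist_pi_lt_iff hε).2 fun s => ?_)
    ((dist_pi_lt_iff hε).2 fun i => (dist_pi_lt_iff hε).2 fun r => ?_)
  · rw [Real.dist_eq, abs_sub_comm]
    exact hA i r s
  · rw [Real.dist_eq, abs_sub_comm]
    simpa [ifsParams] using ha i r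

/-- `π(i j^∞)` for the system with parameters `θ`. -/
def ifsEndpoint {κ : ℕ} (θ : (Fin κ → Fin 2 → Fin 2 → ℝ) × (Fin κ → Fin 2 → ℝ)) (j i : Fin κ) :
    E2 :=
  mLin (θ.1 i) (affineFixedPoint (mLin (θ.1 j)) (WithLp.toLp 2 (θ.2 j))) + WithLp.toLp 2 (θ.2 i)

lemma tendsto_ifsEndpoint {κ : ℕ} {A : Fin κ → Matrix (Fin 2) (Fin 2) ℝ} {j : Fin κ}
    (hj : a1 (A j) < 1) (a : Fin κ → E2) (i : Fin κ) :
    Tendsto (ifsEndpoint · j i) (𝓝 (ifsParams A a)) (𝓝 (ifsEndpoint (ifsParams A a) j i)) := by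
  have hL (k : Fin κ) := (continuous_mLin.comp
    ((continuous_apply k).comp continuous_fst)).continuousAt (x := ifsParams A a)
  have hb (k : Fin κ) := ((PiLp.continuous_toLp 2 _).comp
    ((continuous_apply k).comp continuous_snd)).continuousAt (x := ifsParams A a)
  exact (((hL i).clm_apply ((hL j).affineFixedPoint (hb j) hj)).add (hb i)).tendsto

/-- Corollary 5.4: an algebraic criterion guaranteeing that, stably under perturbations of
the affine IFS, every linear projection of the attractor is an interval of length bounded
below. Here `x i = π(i 1^∞)` and `y i = π(i κ^∞)` are the fixed-point images. -/
theorem stable_projection_condition (κ : ℕ) (hκ : 2 ≤ κ)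
    (A : Fin κ → Matrix (Fin 2) (Fin 2) ℝ) (a : Fin κ → E2)
    (ᾱ : ℝ) (hᾱ : ᾱ < 1) (hnorm : ∀ i, a1 (A i) ≤ ᾱ)
    (x y : Fin κ → E2)
    (hx : ∀ i, x i = a i + ∑' n : ℕ,
      Matrix.toEuclideanLin (A i * (A ⟨0, by omega⟩) ^ n) (a ⟨0, by omega⟩))
    (hy : ∀ i, y i = a i + ∑' n : ℕ,
      Matrix.toEuclideanLin (A i * (A ⟨κ - 1, by omega⟩) ^ n) (a ⟨κ - 1, by omega⟩))
    (M : Matrix (Fin κ) (Fin κ) ℝ)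
    (hM1 : ∀ i j,
      (∃ p : E2, (segment ℝ (x i) (y i) \ {x i, y i}) ∩
        (segment ℝ (x j) (y j) \ {x j, y j}) = {p}) → M i j = 1)
    (hM0 : ∀ i j,
      ¬ (∃ p : E2, (segment ℝ (x i) (y i) \ {x i, y i}) ∩
        (segment ℝ (x j) (y j) \ {x j, y j}) = {p}) → M i j = 0)
    (hirr : ∀ i j, ∃ n : ℕ, 0 < n ∧ 0 < (M ^ n) i j) :
    ∃ ε : ℝ, 0 < ε ∧ ∃ ϱ : ℝ, 0 < ϱ ∧
      ∀ (A' : Fin κ → Matrix (Fin 2) (Fin 2) ℝ) (a' : Fin κ → E2),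
        (∀ i, IsUnit (A' i).det) → (∀ i, a1 (A' i) < 1) →
        (∀ i r s, |A i r s - A' i r s| < ε) →
        (∀ i r, |(a i - a' i) r| < ε) →
        ∀ E' : Set E2, E'.Nonempty → IsCompact E' →
          E' = ⋃ i, (fun v => Matrix.toEuclideanLin (A' i) v + a' i) '' E' →
          ∀ e : E2, ‖e‖ = 1 →
            Convex ℝ {r : ℝ | ∃ v ∈ E', r = (inner ℝ v e : ℝ)} ∧
            ϱ ≤ sSup {r : ℝ | ∃ v ∈ E', r = (inner ℝ v e : ℝ)} -
                sInf {r : ℝ | ∃ v ∈ E', r = (inner ℝ v e : ℝ)} := by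
  set i₁ : Fin κ := ⟨0, by omega⟩
  set iκ : Fin κ := ⟨κ - 1, by omega⟩
  have hX (j i : Fin κ) := tendsto_ifsEndpoint ((hnorm j).trans_lt hᾱ) a i
  have hxX (i : Fin κ) : ifsEndpoint (ifsParams A a) i₁ i = x i := by
    rw [hx, (hasSum_toEuclideanLin_mul_pow _ ((hnorm i₁).trans_lt hᾱ) _).tsum_eq, add_comm]
    rfl
  have hyX (i : Fin κ) : ifsEndpoint (ifsParams A a) iκ i = y i := by
    rw [hy, (hasSum_toEuclideanLin_mul_pow _ ((hnorm iκ).trans_lt hᾱ) _).tsum_eq, add_comm]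
    rfl
  set R : Fin κ → Fin κ → Prop := fun i j => ∃ p : E2, (segment ℝ (x i) (y i) \ {x i, y i}) ∩
    (segment ℝ (x j) (y j) \ {x j, y j}) = {p}
  have hR (i j : Fin κ) : ReflTransGen R i j :=
    reflTransGen_of_pow_apply_pos hM1 hM0 (hirr i j).choose_spec.2
  obtain ⟨i₀, j₀, h₀⟩ : ∃ i j, R i j := by
    obtain h | ⟨k, -, h⟩ := (hR i₁ iκ).cases_tail
    · exact absurd (congrArg Fin.val h) (by simp [i₁, iκ]; omega)
    · exact ⟨k, iκ, h⟩
  obtain ⟨-, -, -, -, -, hd⟩ := crossTransversally_of_inter_eq_singleton h₀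
  obtain ⟨c, hc, hwidth⟩ := exists_pos_eventually_le_max_abs_inner
    (fun e => eq_zero_of_inner_eq_zero_of_det2_ne_zero hd)
    ((hyX i₀ ▸ hX iκ i₀).sub (hxX i₀ ▸ hX i₁ i₀)) ((hyX j₀ ▸ hX iκ j₀).sub (hxX j₀ ▸ hX i₁ j₀))
  obtain ⟨ε, hε, hθ⟩ := Metric.eventually_nhds_iff.1 <|
    (eventually_forall_segment_inter_nonempty (fun i => hxX i ▸ hX i₁ i)
      (fun i => hyX i ▸ hX iκ i)).and hwidth
  refine ⟨ε, hε, c, hc, fun A' a' _ hA' hAA' haa' E' hne hcpt hE' e he => ?_⟩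
  obtain ⟨hlink, hmax⟩ := hθ (dist_ifsParams_lt hε hAA' haa')
  have hmaps (i : Fin κ) : MapsTo (fun v => mLin (A' i) v + a' i) E' E' :=
    (mapsTo_image _ _).mono_right ((subset_iUnion _ i).trans hE'.superset)
  exact convex_and_le_width_of_reflTransGen hA' hcpt hne hE'
    (affineFixedPoint_mem (hA' i₁) _ hcpt.isClosed hne (hmaps i₁))
    (affineFixedPoint_mem (hA' iκ) _ hcpt.isClosed hne (hmaps iκ))
    (fun i j => ReflTransGen.mono hlink _ _ (hR i j)) (hmax e he)

end
end
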